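/- If p is a trigonometric polynomial of degree at most n interpolating a 2π-periodic C^∞ function x at 2n+1 equally spaced points and x has Fourier coefficients decaying like |c_m| ≤ C e^{−α|m|} for some α > 0, then sup_λ |x(λ) − p(λ)| ≤ C' e^{−αn} for some constant C' independent of n (spectral convergence of trigonometric interpolation). -/

import Mathlib

/-!
At the nodes `λₖ = 2πk/(2n+1)` the character `e^{iμλₖ}` only depends on `μ` modulo `2n+1`,
so `x(λₖ) = ∑_μ c_μ e^{iμ̃λₖ}`, where `μ̃ ∈ [-n, n]` is the balanced residue of `μ`. The right-hand
side is a trigonometric polynomial of degree `n`, and discrete orthogonality of the characters on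
the nodes makes the interpolant unique, so `p(λ) = ∑_μ c_μ e^{iμ̃λ}` for every `λ`. Since `μ̃ = μ`
for `|μ| ≤ n`, this gives
`|x(λ) - p(λ)| ≤ 2 ∑_{|μ|>n} |c_μ| ≤ 2C ∑_{|μ|>n} e^{-α|μ|} ≤ 2C e^{-αn} ∑_μ e^{-α|μ|}`.
-/

open Complex Finset

lemma norm_exp_I_int_mul (m : ℤ) (t : ℝ) : ‖cexp (I * m * t)‖ = 1 := by
  rw [mul_assoc, ← ofReal_intCast, ← ofReal_mul, norm_exp_I_mul_ofReal]

lemma exp_I_int_add_mul (a b : ℤ) (t : ℝ) :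
    cexp (I * ↑(a + b) * t) = cexp (I * a * t) * cexp (I * b * t) := by
  rw [← exp_add]
  push_cast
  ring_nf

noncomputable def node (N k : ℕ) : ℝ := 2 * Real.pi * k / N

lemma exp_I_int_mul_node (N : ℕ) (r : ℤ) (k : ℕ) :
    cexp (I * r * node N k) = (cexp (2 * Real.pi * I / N) ^ r) ^ k := by
  rw [← exp_int_mul, ← exp_nat_mul, node]
  push_cast
  ring_nf

lemma sum_range_exp_I_int_mul_node {N : ℕ} (hN : N ≠ 0) (r : ℤ) :
    ∑ k ∈ range N, cexp (I * r * node N k) = if (N : ℤ) ∣ r then (N : ℂ) else 0 := by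
  have hζ := isPrimitiveRoot_exp N hN
  simp_rw [exp_I_int_mul_node]
  split_ifs with hr
  · simp [(hζ.zpow_eq_one_iff_dvd r).2 hr]
  · have hne : cexp (2 * Real.pi * I / N) ^ r - 1 ≠ 0 :=
      sub_ne_zero.2 fun h => hr ((hζ.zpow_eq_one_iff_dvd r).1 h)
    apply mul_right_cancel₀ hne
    rw [geom_sum_mul, zero_mul, ← zpow_natCast, ← zpow_mul, mul_comm r, zpow_mul, zpow_natCast,
      hζ.pow_eq_one, one_zpow, sub_self]

lemma exp_I_bmod_mul_node (N : ℕ) (μ : ℤ) (k : ℕ) :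
    cexp (I * (μ.bmod N : ℤ) * node N k) = cexp (I * μ * node N k) := by
  rcases Nat.eq_zero_or_pos N with rfl | hN
  · simp
  have hζ := isPrimitiveRoot_exp N hN.ne'
  rw [exp_I_int_mul_node, exp_I_int_mul_node]
  conv_rhs => rw [← Int.bmod_add_bdiv μ N]
  rw [zpow_add₀ (hζ.ne_zero hN.ne'), zpow_mul, zpow_natCast, hζ.pow_eq_one, one_zpow, mul_one]

lemma bmod_mem_Icc (n : ℕ) (μ : ℤ) : μ.bmod (2 * n + 1) ∈ Icc (-(n : ℤ)) n := by
  have h₁ := Int.le_bmod (x := μ) (m := 2 * n + 1) (by omega)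
  have h₂ := Int.bmod_lt (x := μ) (m := 2 * n + 1) (by omega)
  push_cast at h₁ h₂
  rw [mem_Icc]
  omega

lemma bmod_eq_iff_of_mem_Icc (n : ℕ) (μ : ℤ) {m : ℤ} (hm : m ∈ Icc (-(n : ℤ)) n) :
    μ.bmod (2 * n + 1) = m ↔ ((2 * n + 1 : ℕ) : ℤ) ∣ m - μ := by
  rw [Int.bmod_eq_iff (by omega)]
  rw [mem_Icc] at hm
  push_cast
  omega

noncomputable def trigPoly (n : ℕ) (a : ℤ → ℂ) (t : ℝ) : ℂ :=
  ∑ m ∈ Icc (-(n : ℤ)) n, a m * cexp (I * m * t)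

lemma sum_range_trigPoly_node_mul (n : ℕ) (a : ℤ → ℂ) {m : ℤ} (hm : m ∈ Icc (-(n : ℤ)) n) :
    ∑ k ∈ range (2 * n + 1),
        trigPoly n a (node (2 * n + 1) k) * cexp (I * ↑(-m) * node (2 * n + 1) k)
      = (2 * n + 1 : ℕ) * a m := by
  simp_rw [trigPoly, sum_mul, mul_assoc (a _), ← exp_I_int_add_mul]
  rw [sum_comm]
  simp_rw [← mul_sum, sum_range_exp_I_int_mul_node (N := 2 * n + 1) (by omega),
    ← sub_eq_add_neg]
  have hdvd : ∀ j ∈ Icc (-(n : ℤ)) n, ((2 * n + 1 : ℕ) : ℤ) ∣ j - m ↔ m = j := fun j hj => by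
    rw [← bmod_eq_iff_of_mem_Icc n m hj, Int.bmod_eq_of_le] <;> simp only [mem_Icc] at hm <;> omega
  rw [sum_congr rfl fun j hj => by rw [if_congr (hdvd j hj) rfl rfl, mul_ite, mul_zero],
    sum_ite_eq, if_pos hm, mul_comm]

lemma trigPoly_eq_of_eq_on_nodes (n : ℕ) {a b : ℤ → ℂ}
    (h : ∀ k < 2 * n + 1, trigPoly n a (node (2 * n + 1) k) = trigPoly n b (node (2 * n + 1) k)) :
    trigPoly n a = trigPoly n b := by
  have hcoeff : ∀ m ∈ Icc (-(n : ℤ)) n, a m = b m := fun m hm => by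
    have hab := sum_range_trigPoly_node_mul n a hm
    rw [sum_congr rfl fun k hk => by rw [h k (mem_range.1 hk)],
      sum_range_trigPoly_node_mul n b hm] at hab
    exact mul_left_cancel₀ (Nat.cast_ne_zero.2 (Nat.succ_ne_zero _)) hab.symm
  funext t
  exact sum_congr rfl fun m hm => by rw [hcoeff m hm]

noncomputable def aliasedCoeff (n : ℕ) (c : ℤ → ℂ) (m : ℤ) : ℂ :=
  ∑' μ : ℤ, if μ.bmod (2 * n + 1) = m then c μ else 0

section Aliasing

variable {c : ℤ → ℂ}

lemma trigPoly_aliasedCoeff (n : ℕ) (hc : Summable fun μ => ‖c μ‖) (t : ℝ) :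
    trigPoly n (aliasedCoeff n c) t = ∑' μ, c μ * cexp (I * (μ.bmod (2 * n + 1) : ℤ) * t) := by
  have hsumm (m : ℤ) :
      Summable fun μ : ℤ => if μ.bmod (2 * n + 1) = m then c μ * cexp (I * m * t) else 0 :=
    hc.of_norm_bounded fun μ => by split_ifs <;> simp [norm_exp_I_int_mul]
  simp_rw [trigPoly, aliasedCoeff, ← tsum_mul_right, ite_mul, zero_mul]
  rw [← Summable.tsum_finsetSum fun m _ => hsumm m]
  exact tsum_congr fun μ => by rw [sum_ite_eq, if_pos (bmod_mem_Icc n μ)]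

lemma trigPoly_aliasedCoeff_node (n : ℕ) (hc : Summable fun μ => ‖c μ‖) (k : ℕ) :
    trigPoly n (aliasedCoeff n c) (node (2 * n + 1) k)
      = ∑' μ, c μ * cexp (I * μ * node (2 * n + 1) k) := by
  simp_rw [trigPoly_aliasedCoeff n hc, exp_I_bmod_mul_node]

lemma norm_tsum_sub_tsum_bmod_le (n : ℕ) (hc : Summable fun μ => ‖c μ‖) (t : ℝ) :
    ‖∑' μ, c μ * cexp (I * μ * t) - ∑' μ, c μ * cexp (I * (μ.bmod (2 * n + 1) : ℤ) * t)‖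
      ≤ 2 * ∑' μ, {μ : ℤ | (n : ℤ) < |μ|}.indicator (fun μ => ‖c μ‖) μ := by
  set s := {μ : ℤ | (n : ℤ) < |μ|}
  have hsumm (e : ℤ → ℤ) : Summable fun μ => c μ * cexp (I * (e μ : ℤ) * t) :=
    hc.of_norm_bounded fun μ => by simp [norm_exp_I_int_mul]
  have hsumm_id : Summable fun μ : ℤ => c μ * cexp (I * μ * t) := hsumm id
  have hbound (μ : ℤ) : ‖c μ * cexp (I * μ * t) - c μ * cexp (I * (μ.bmod (2 * n + 1) : ℤ) * t)‖
      ≤ 2 * s.indicator (fun μ => ‖c μ‖) μ := by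
    by_cases hμ : μ ∈ s
    · rw [Set.indicator_of_mem hμ]
      refine (norm_sub_le _ _).trans_eq ?_
      simp only [norm_mul, norm_exp_I_int_mul, mul_one]
      ring
    · have hbmod : μ.bmod (2 * n + 1) = μ := by
        rw [bmod_eq_iff_of_mem_Icc n μ (mem_Icc.2 (abs_le.1 (not_lt.1 hμ))), sub_self]
        exact dvd_zero _
      simp [hbmod, Set.indicator_of_notMem hμ]
  have hmajor := (hc.indicator s).mul_left 2
  have hnorm := hmajor.of_nonneg_of_le (fun _ => norm_nonneg _) hbound
  rw [← hsumm_id.tsum_sub (hsumm fun μ => μ.bmod (2 * n + 1)), ← tsum_mul_left]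
  exact (norm_tsum_le_tsum_norm hnorm).trans (hnorm.tsum_le_tsum hbound hmajor)

end Aliasing

lemma summable_exp_neg_mul_abs {α : ℝ} (hα : 0 < α) :
    Summable fun m : ℤ => Real.exp (-α * |m|) := by
  have h : Summable fun k : ℕ => Real.exp (-α * k) := by
    simpa only [← Real.exp_nat_mul, mul_comm] using summable_geometric_of_lt_one
      (Real.exp_nonneg (-α)) (Real.exp_lt_one_iff.2 (neg_neg_of_pos hα))
  exact summable_int_iff_summable_nat_and_neg.2 ⟨by simpa using h, by simpa using h⟩

lemma tsum_indicator_le_mul_tsum_indicator {ι : Type*} {f g : ι → ℝ} (hf : Summable f)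
    (hg : Summable g) {C : ℝ} (h : ∀ i, f i ≤ C * g i) (s : Set ι) :
    ∑' i, s.indicator f i ≤ C * ∑' i, s.indicator g i := by
  rw [← tsum_mul_left]
  refine (hf.indicator s).tsum_le_tsum (fun i => ?_) ((hg.indicator s).mul_left C)
  rw [← Set.indicator_const_mul]
  exact Set.indicator_le_indicator (h i)

lemma tsum_indicator_exp_neg_mul_abs_le {α : ℝ} (hα : 0 < α) (n : ℕ) :
    ∑' μ : ℤ, {μ : ℤ | (n : ℤ) < |μ|}.indicator (fun μ => Real.exp (-α * |μ|)) μ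
      ≤ Real.exp (-α * n) * ∑' μ : ℤ, Real.exp (-α * |μ|) := by
  set f := {μ : ℤ | (n : ℤ) < |μ|}.indicator fun μ : ℤ => Real.exp (-α * |μ|)
  let shift : ℤ → ℤ := fun j => if 0 ≤ j then j + (n + 1) else j - n
  have hinj : Function.Injective shift := by
    intro a b h
    simp only [shift] at h
    split_ifs at h <;> omega
  have hsupp : Function.support f ⊆ Set.range shift := by
    intro μ hμ
    have htail : (n : ℤ) < |μ| := by
      by_contra h
      exact hμ (Set.indicator_of_notMem (show μ ∉ {μ : ℤ | (n : ℤ) < |μ|} from h) _)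
    rcases lt_abs.1 htail with h | h
    · exact ⟨μ - (n + 1), by simp only [shift]; split_ifs <;> omega⟩
    · exact ⟨μ + n, by simp only [shift]; split_ifs <;> omega⟩
  have hle (j : ℤ) : f (shift j) ≤ Real.exp (-α * n) * Real.exp (-α * |j|) := by
    have habs : |j| + n ≤ |shift j| := by
      simp only [shift]
      split_ifs with hj
      · rw [abs_of_nonneg hj, abs_of_nonneg (by omega)]; omega
      · rw [abs_of_neg (not_le.1 hj), abs_of_neg (by omega)]; omega
    have habs' : ((|j| : ℤ) : ℝ) + n ≤ (|shift j| : ℤ) := by exact_mod_cast habs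
    rw [← Real.exp_add]
    refine (Set.indicator_le_self' (fun _ _ => (Real.exp_pos _).le) _).trans
      (Real.exp_le_exp.2 ?_)
    nlinarith [mul_le_mul_of_nonneg_left habs' hα.le]
  have hsumm := summable_exp_neg_mul_abs hα
  rw [← hinj.tsum_eq hsupp, ← tsum_mul_left]
  exact ((hsumm.indicator _).comp_injective hinj).tsum_le_tsum hle (hsumm.mul_left _)

/-- If `p` is a trigonometric polynomial of degree at most `n` interpolating a `2π`-periodic
smooth function `x` at the `2n+1` equally spaced points, and `x` has Fourier coefficients
decaying like `|c_m| ≤ C e^{−α|m|}` for some `α > 0`, then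
`sup_λ |x(λ) − p(λ)| ≤ C' e^{−αn}` for some constant `C'` independent of `n`
(spectral convergence of trigonometric interpolation). -/
theorem trig_interpolation_spectral_convergence
    (x : ℝ → ℂ) (c : ℤ → ℂ) (C α : ℝ) (hα : 0 < α) (hC : 0 ≤ C)
    (hsum : Summable fun m : ℤ => ‖c m‖)
    (hx : ∀ l : ℝ, x l = ∑' m : ℤ, c m * Complex.exp (Complex.I * m * l))
    (hdecay : ∀ m : ℤ, ‖c m‖ ≤ C * Real.exp (-α * |m|)) :
    ∃ C' : ℝ, ∀ (n : ℕ) (d : ℤ → ℂ),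
      (∀ k : Fin (2 * n + 1),
        (∑ m ∈ Finset.Icc (-(n : ℤ)) (n : ℤ),
            d m * Complex.exp (Complex.I * m * (2 * Real.pi * k / (2 * n + 1))))
          = x (2 * Real.pi * k / (2 * n + 1))) →
      ∀ l : ℝ,
        ‖x l - ∑ m ∈ Finset.Icc (-(n : ℤ)) (n : ℤ), d m * Complex.exp (Complex.I * m * l)‖
          ≤ C' * Real.exp (-α * n) := by
  refine ⟨2 * C * ∑' μ : ℤ, Real.exp (-α * |μ|), fun n d hd l => ?_⟩
  have hnode (k : ℕ) : node (2 * n + 1) k = 2 * Real.pi * k / (2 * n + 1) := by simp [node]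
  have hp : trigPoly n d = trigPoly n (aliasedCoeff n c) :=
    trigPoly_eq_of_eq_on_nodes n fun k hk => by
      rw [trigPoly_aliasedCoeff_node n hsum, ← hx, hnode, ← hd ⟨k, hk⟩, trigPoly]
      push_cast
      rfl
  set s := {μ : ℤ | (n : ℤ) < |μ|}
  calc ‖x l - ∑ m ∈ Icc (-(n : ℤ)) n, d m * cexp (I * m * l)‖
      = ‖∑' μ, c μ * cexp (I * μ * l)
          - ∑' μ, c μ * cexp (I * (μ.bmod (2 * n + 1) : ℤ) * l)‖ := by
        rw [hx, ← trigPoly_aliasedCoeff n hsum, ← hp, trigPoly]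
    _ ≤ 2 * (C * ∑' μ, s.indicator (fun μ => Real.exp (-α * |μ|)) μ) :=
        (norm_tsum_sub_tsum_bmod_le n hsum l).trans <| by
          gcongr
          exact tsum_indicator_le_mul_tsum_indicator hsum (summable_exp_neg_mul_abs hα) hdecay s
    _ ≤ 2 * (C * (Real.exp (-α * n) * ∑' μ : ℤ, Real.exp (-α * |μ|))) := by
        gcongr
        exact tsum_indicator_exp_neg_mul_abs_le hα n
    _ = 2 * C * (∑' μ : ℤ, Real.exp (-α * |μ|)) * Real.exp (-α * n) := by ring
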